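/- arXiv:2005.02187 — 2 statements merged into one kernel-verified Lean document; each statement's English description precedes it below -/
import Mathlib

section
/- Let X be a right Hilbert A-module, let x ∈ X, and let 0 < α < 1. Then there exists w ∈ X such that x = w · ⟨x, x⟩^{α/2}, where ⟨x,x⟩^{α/2} is defined by continuous functional calculus applied to the positive element ⟨x,x⟩. -/
open scoped InnerProductSpace RightActions NNReal

/-- The class `CStarModule` as it stood in Mathlib (Dec 2024): a *right* Hilbert `A`-module,
with `A` acting on the right through `Aᵐᵒᵖ` and the inner product `A`-linear in the second
argument for that right action. -/
class RightCStarModule (A : outParam <| Type*) (E : Type*) [NonUnitalSemiring A] [StarRing A]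
    [Module ℂ A] [AddCommGroup E] [Module ℂ E] [PartialOrder A] [SMul Aᵐᵒᵖ E] [Norm A] [Norm E]
    extends Inner A E where
  inner_add_right {x} {y} {z} : inner x (y + z) = inner x y + inner x z
  inner_self_nonneg {x} : 0 ≤ inner x x
  inner_self {x} : inner x x = 0 ↔ x = 0
  inner_op_smul_right {a : A} {x y : E} : inner x (y <• a) = inner x y * a
  inner_smul_right_complex {z : ℂ} {x} {y} : inner x (z • y) = z • inner x y
  star_inner x y : star (inner x y) = inner y x
  norm_eq_sqrt_norm_inner_self x : ‖x‖ = √‖inner x x‖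

/-!
Write `p = ⟪x, x⟫` and `β = α / 2`. For `f` continuous on `[0, ∞)` with `f 0 = 0`,
`⟪x·f(p), x·f(p)⟫ = f(p) p f(p)`, so `‖x·f(p)‖ ≤ sup_{t ≥ 0} √t |f t|`, and likewise
`‖x·f(p) - x‖ ≤ sup_{t ≥ 0} √t |f t - 1|`. For `g_ε t = t ^ (1 - β) / (t + ε)` (an approximation
of `t ^ (-β)`) we have `√t g_ε t = t ^ (1/2 - β) (1 - ε / (t + ε))`, and weighted AM-GM gives
`t ^ γ ε / (t + ε) ≤ ε ^ γ` for `0 ≤ γ ≤ 1`. Since `β < 1/2`, `x·g_ε(p)` is therefore Cauchy as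
`ε → 0⁺`; call its limit `w`. On the other hand `x·g_ε(p)·p^β = x·p(p + ε)⁻¹ → x`, so `x = w·p^β`.
-/

open Filter Topology

namespace RightCStarModule

variable {A : Type*} [NonUnitalCStarAlgebra A] [PartialOrder A]
  {X : Type*} [NormedAddCommGroup X] [NormedSpace ℂ X] [SMul Aᵐᵒᵖ X] [RightCStarModule A X]

theorem inner_sub_right {x y z : X} : ⟪x, y - z⟫_A = ⟪x, y⟫_A - ⟪x, z⟫_A :=
  eq_sub_of_add_eq <| by rw [← inner_add_right, sub_add_cancel]

theorem inner_add_left {x y z : X} : ⟪x + y, z⟫_A = ⟪x, z⟫_A + ⟪y, z⟫_A := by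
  rw [← star_inner z, inner_add_right, star_add, star_inner, star_inner]

theorem inner_sub_left {x y z : X} : ⟪x - y, z⟫_A = ⟪x, z⟫_A - ⟪y, z⟫_A :=
  eq_sub_of_add_eq <| by rw [← inner_add_left, sub_add_cancel]

theorem inner_op_smul_left {a : A} {x y : X} : ⟪x <• a, y⟫_A = star a * ⟪x, y⟫_A := by
  rw [← star_inner y, inner_op_smul_right, star_mul, star_inner]

theorem ext_inner_right {x y : X} (h : ∀ z : X, ⟪z, x⟫_A = ⟪z, y⟫_A) : x = y := by
  rw [← sub_eq_zero, ← inner_self (A := A), inner_sub_right, h, sub_self]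

theorem op_smul_sub {x : X} {a b : A} : x <• (a - b) = x <• a - x <• b :=
  ext_inner_right fun z => by
    rw [inner_sub_right, inner_op_smul_right, inner_op_smul_right, inner_op_smul_right, mul_sub]

theorem op_smul_mul {x : X} {a b : A} : x <• (a * b) = x <• a <• b :=
  ext_inner_right fun z => by simp only [inner_op_smul_right, mul_assoc]

theorem sub_op_smul {x y : X} {a : A} : (x - y) <• a = x <• a - y <• a :=
  ext_inner_right fun z => by
    rw [inner_sub_right, inner_op_smul_right, inner_op_smul_right, inner_op_smul_right,
      inner_sub_right, sub_mul]

theorem norm_le_iff_norm_inner_self_le {x : X} {C : ℝ} (hC : 0 ≤ C) :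
    ‖x‖ ≤ C ↔ ‖⟪x, x⟫_A‖ ≤ C ^ 2 := by
  rw [norm_eq_sqrt_norm_inner_self, Real.sqrt_le_left hC]

theorem norm_op_smul_le {x : X} {a : A} : ‖x <• a‖ ≤ ‖x‖ * ‖a‖ := by
  rw [norm_le_iff_norm_inner_self_le (by positivity), inner_op_smul_left, inner_op_smul_right,
    mul_pow, norm_eq_sqrt_norm_inner_self x, Real.sq_sqrt (norm_nonneg _), ← mul_assoc]
  calc ‖star a * ⟪x, x⟫_A * a‖ ≤ ‖star a‖ * ‖⟪x, x⟫_A‖ * ‖a‖ := norm_mul₃_le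
    _ = ‖⟪x, x⟫_A‖ * ‖a‖ ^ 2 := by rw [norm_star]; ring

theorem lipschitzWith_op_smul (a : A) : LipschitzWith ‖a‖₊ fun x : X => x <• a :=
  LipschitzWith.of_dist_le_mul fun x y => by
    rw [dist_eq_norm, dist_eq_norm, ← sub_op_smul, mul_comm, coe_nnnorm]
    exact norm_op_smul_le

end RightCStarModule

section

variable {A : Type*} [NonUnitalCStarAlgebra A] [PartialOrder A] [StarOrderedRing A]

theorem norm_cfcₙ_mul_sq_le {p : A} (hp : 0 ≤ p) (f : ℝ → ℝ) {C : ℝ}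
    (hC : ∀ t ≥ 0, √t * |f t| ≤ C) : ‖cfcₙ (fun t => t * f t ^ 2) p‖ ≤ C ^ 2 :=
  norm_cfcₙ_le fun t ht => by
    have ht0 : 0 ≤ t := NonnegSpectrumClass.nonneg_of_mem_quasispectrum hp ht
    calc ‖t * f t ^ 2‖ = (√t * |f t|) ^ 2 := by
          rw [mul_pow, Real.sq_sqrt ht0, sq_abs, Real.norm_of_nonneg (by positivity)]
      _ ≤ C ^ 2 := pow_le_pow_left₀ (by positivity) (hC t ht0) 2

end

theorem Real.rpow_mul_div_add_le {t ε γ : ℝ} (ht : 0 ≤ t) (hε : 0 < ε) (hγ0 : 0 ≤ γ)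
    (hγ1 : γ ≤ 1) : t ^ γ * (ε / (t + ε)) ≤ ε ^ γ := by
  have amgm : t ^ γ * ε ^ (1 - γ) ≤ γ * t + (1 - γ) * ε :=
    Real.geom_mean_le_arith_mean2_weighted hγ0 (sub_nonneg.2 hγ1) ht hε.le (by ring)
  rw [mul_div_assoc', div_le_iff₀ (by positivity)]
  calc t ^ γ * ε = t ^ γ * ε ^ (1 - γ) * ε ^ γ := by
        rw [mul_assoc, ← Real.rpow_add hε, sub_add_cancel, Real.rpow_one]
    _ ≤ (γ * t + (1 - γ) * ε) * ε ^ γ := by gcongr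
    _ ≤ (t + ε) * ε ^ γ := mul_le_mul_of_nonneg_right (by nlinarith) (by positivity)
    _ = ε ^ γ * (t + ε) := mul_comm _ _

noncomputable def approxRpowNeg (β ε t : ℝ) : ℝ := t ^ (1 - β) / (t + ε)

section approxRpowNeg

variable {β ε t : ℝ}

theorem continuousOn_approxRpowNeg (hβ : β < 1) (hε : 0 < ε) :
    ContinuousOn (approxRpowNeg β ε) (Set.Ici 0) :=
  ((Real.continuous_rpow_const (by linarith)).continuousOn).div (by fun_prop)
    fun t ht => by have : (0 : ℝ) ≤ t := ht; positivity

theorem approxRpowNeg_apply_zero (hβ : β < 1) : approxRpowNeg β ε 0 = 0 := by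
  simp [approxRpowNeg, Real.zero_rpow (by linarith : 1 - β ≠ 0)]

theorem approxRpowNeg_mul_rpow (ht : 0 ≤ t) : approxRpowNeg β ε t * t ^ β = t / (t + ε) := by
  rw [approxRpowNeg, div_mul_eq_mul_div, ← Real.rpow_add' ht (by norm_num), sub_add_cancel,
    Real.rpow_one]

theorem sqrt_mul_approxRpowNeg (hβ : β < 3 / 2) (ht : 0 ≤ t) (hε : 0 < ε) :
    √t * approxRpowNeg β ε t = t ^ (1 / 2 - β) - t ^ (1 / 2 - β) * (ε / (t + ε)) := by
  have hpow : √t * t ^ (1 - β) = t ^ (1 / 2 - β) * t := by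
    rw [Real.sqrt_eq_rpow, ← Real.rpow_add' ht (by linarith), ← Real.rpow_add_one' ht (by linarith)]
    ring_nf
  rw [approxRpowNeg, ← mul_div_assoc, hpow]
  field_simp
  ring

theorem sqrt_mul_abs_approxRpowNeg_sub_le (hβ : β ≤ 1 / 2) (hβ' : -1 / 2 ≤ β) {δ η : ℝ}
    (ht : 0 ≤ t) (hε : 0 < ε) (hδ : 0 < δ) (hεη : ε ≤ η) (hδη : δ ≤ η) :
    √t * |approxRpowNeg β ε t - approxRpowNeg β δ t| ≤ η ^ (1 / 2 - β) := by
  have hγ0 : 0 ≤ 1 / 2 - β := by linarith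
  have hγ1 : 1 / 2 - β ≤ 1 := by linarith
  have hbound : ∀ κ, 0 < κ → κ ≤ η → t ^ (1 / 2 - β) * (κ / (t + κ)) ≤ η ^ (1 / 2 - β) :=
    fun κ hκ hκη => (Real.rpow_mul_div_add_le ht hκ hγ0 hγ1).trans
      (Real.rpow_le_rpow hκ.le hκη hγ0)
  rw [← abs_of_nonneg (Real.sqrt_nonneg t), ← abs_mul, mul_sub,
    sqrt_mul_approxRpowNeg (by linarith) ht hε, sqrt_mul_approxRpowNeg (by linarith) ht hδ,
    sub_sub_sub_cancel_left]
  exact abs_sub_le_of_nonneg_of_le (by positivity) (hbound δ hδ hδη) (by positivity)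
    (hbound ε hε hεη)

end approxRpowNeg

theorem sqrt_mul_abs_div_add_sub_one_le {t ε : ℝ} (ht : 0 ≤ t) (hε : 0 < ε) :
    √t * |t / (t + ε) - 1| ≤ √ε := by
  have hsub : t / (t + ε) - 1 = -(ε / (t + ε)) := by field_simp; ring
  rw [hsub, abs_neg, abs_of_nonneg (by positivity), Real.sqrt_eq_rpow, Real.sqrt_eq_rpow]
  exact Real.rpow_mul_div_add_le ht hε (by norm_num) (by norm_num)

namespace RightCStarModule

variable {A : Type*} [NonUnitalCStarAlgebra A] [PartialOrder A] [StarOrderedRing A]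
  {X : Type*} [NormedAddCommGroup X] [NormedSpace ℂ X] [SMul Aᵐᵒᵖ X] [RightCStarModule A X]
  (x : X)

theorem quasispectrum_inner_self_subset : quasispectrum ℝ ⟪x, x⟫_A ⊆ Set.Ici 0 :=
  fun _ ht =>
    Set.mem_Ici.mpr <| NonnegSpectrumClass.nonneg_of_mem_quasispectrum inner_self_nonneg ht

section

variable {f : ℝ → ℝ} (hf : ContinuousOn f (Set.Ici 0)) (hf0 : f 0 = 0) {C : ℝ}

include hf hf0 in
theorem inner_op_smul_cfcₙ_inner_self :
    ⟪x <• cfcₙ f ⟪x, x⟫_A, x <• cfcₙ f ⟪x, x⟫_A⟫_A = cfcₙ (fun t => t * f t ^ 2) ⟪x, x⟫_A := by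
  rw [inner_op_smul_left, inner_op_smul_right]
  have hp : 0 ≤ ⟪x, x⟫_A := inner_self_nonneg
  replace hf := hf.mono (quasispectrum_inner_self_subset x)
  calc star (cfcₙ f ⟪x, x⟫_A) * (⟪x, x⟫_A * cfcₙ f ⟪x, x⟫_A)
      = cfcₙ f ⟪x, x⟫_A * (cfcₙ (fun t => t) ⟪x, x⟫_A * cfcₙ f ⟪x, x⟫_A) := by
        rw [IsSelfAdjoint.cfcₙ.star_eq, cfcₙ_id' ℝ ⟪x, x⟫_A]
    _ = cfcₙ (fun t => f t * (t * f t)) ⟪x, x⟫_A := by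
        rw [cfcₙ_mul f (fun t => t * f t) ⟪x, x⟫_A, cfcₙ_mul (fun t => t) f ⟪x, x⟫_A]
    _ = cfcₙ (fun t => t * f t ^ 2) ⟪x, x⟫_A := by congr! 2 with t; ring

include hf hf0 in
theorem inner_op_smul_cfcₙ_sub_self :
    ⟪x <• cfcₙ f ⟪x, x⟫_A - x, x <• cfcₙ f ⟪x, x⟫_A - x⟫_A =
      cfcₙ (fun t => t * (f t - 1) ^ 2) ⟪x, x⟫_A := by
  rw [inner_sub_left, inner_sub_right, inner_sub_right, inner_op_smul_cfcₙ_inner_self x hf hf0,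
    inner_op_smul_left, inner_op_smul_right, IsSelfAdjoint.cfcₙ.star_eq]
  have hp : 0 ≤ ⟪x, x⟫_A := inner_self_nonneg
  replace hf := hf.mono (quasispectrum_inner_self_subset x)
  have hsplit : cfcₙ (fun t => t * (f t - 1) ^ 2) ⟪x, x⟫_A =
      cfcₙ (fun t => t * f t ^ 2 - f t * t - (t * f t - t)) ⟪x, x⟫_A := by
    congr! 2 with t; ring
  rw [hsplit, cfcₙ_sub _ _ ⟪x, x⟫_A, cfcₙ_sub _ _ ⟪x, x⟫_A, cfcₙ_sub _ _ ⟪x, x⟫_A,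
    cfcₙ_mul (fun t => t) f ⟪x, x⟫_A, cfcₙ_mul f (fun t => t) ⟪x, x⟫_A, cfcₙ_id' ℝ ⟪x, x⟫_A]

include hf hf0 in
theorem norm_op_smul_cfcₙ_le (hC : ∀ t ≥ 0, √t * |f t| ≤ C) :
    ‖x <• cfcₙ f ⟪x, x⟫_A‖ ≤ C := by
  have hC0 : 0 ≤ C := by simpa using hC 0 le_rfl
  rw [norm_le_iff_norm_inner_self_le hC0, inner_op_smul_cfcₙ_inner_self x hf hf0]
  exact norm_cfcₙ_mul_sq_le inner_self_nonneg f hC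

include hf hf0 in
theorem norm_op_smul_cfcₙ_sub_self_le (hC : ∀ t ≥ 0, √t * |f t - 1| ≤ C) :
    ‖x <• cfcₙ f ⟪x, x⟫_A - x‖ ≤ C := by
  have hC0 : 0 ≤ C := by simpa using hC 0 le_rfl
  rw [norm_le_iff_norm_inner_self_le hC0, inner_op_smul_cfcₙ_sub_self x hf hf0]
  exact norm_cfcₙ_mul_sq_le inner_self_nonneg (fun t => f t - 1) hC

end

theorem tendsto_op_smul_cfcₙ_div_add {ι : Type*} {l : Filter ι} {ε : ι → ℝ} (hε : ∀ i, 0 < ε i)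
    (hlim : Tendsto ε l (𝓝 0)) :
    Tendsto (fun i => x <• cfcₙ (fun t => t / (t + ε i)) ⟪x, x⟫_A) l (𝓝 x) := by
  rw [tendsto_iff_norm_sub_tendsto_zero]
  refine squeeze_zero (fun _ => norm_nonneg _) (fun i => ?_) (by simpa using hlim.sqrt)
  refine norm_op_smul_cfcₙ_sub_self_le x ?_ (by simp) fun t ht =>
    sqrt_mul_abs_div_add_sub_one_le ht (hε i)
  exact continuousOn_id.div (by fun_prop) fun t (ht : 0 ≤ t) => by have := hε i; positivity

variable {β : ℝ}

theorem cauchySeq_op_smul_cfcₙ_approxRpowNeg {ι : Type*} [Nonempty ι] [SemilatticeSup ι]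
    {ε : ι → ℝ} (hε : ∀ i, 0 < ε i) (hlim : Tendsto ε atTop (𝓝 0))
    (hβ : β < 1 / 2) (hβ' : -1 / 2 ≤ β) :
    CauchySeq fun i => x <• cfcₙ (approxRpowNeg β (ε i)) ⟪x, x⟫_A := by
  have hmax : Tendsto (fun n : ι × ι => max (ε n.1) (ε n.2) ^ (1 / 2 - β)) atTop (𝓝 0) := by
    rw [← prod_atTop_atTop_eq]
    have := ((hlim.comp tendsto_fst).max (hlim.comp tendsto_snd)).rpow_const
      (Or.inr (by linarith : (0 : ℝ) ≤ 1 / 2 - β))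
    rwa [max_self, Real.zero_rpow (by linarith)] at this
  rw [cauchySeq_iff_tendsto_dist_atTop_0]
  refine squeeze_zero (fun _ => dist_nonneg) (fun n => ?_) hmax
  have hcont : ∀ i, ContinuousOn (approxRpowNeg β (ε i)) (Set.Ici 0) :=
    fun i => continuousOn_approxRpowNeg (by linarith) (hε i)
  have hzero : ∀ i, approxRpowNeg β (ε i) 0 = 0 := fun _ => approxRpowNeg_apply_zero (by linarith)
  rw [dist_eq_norm, ← op_smul_sub, ← cfcₙ_sub _ _ _
    ((hcont n.1).mono (quasispectrum_inner_self_subset x)) (hzero n.1)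
    ((hcont n.2).mono (quasispectrum_inner_self_subset x)) (hzero n.2)]
  exact norm_op_smul_cfcₙ_le x ((hcont n.1).sub (hcont n.2)) (by simp [hzero]) fun t ht =>
    sqrt_mul_abs_approxRpowNeg_sub_le hβ.le hβ' ht (hε n.1) (hε n.2) (le_max_left _ _)
      (le_max_right _ _)

theorem op_smul_cfcₙ_approxRpowNeg_op_smul_cfcₙ_rpow (hβ : 0 < β) (hβ1 : β < 1) {ε : ℝ}
    (hε : 0 < ε) :
    x <• cfcₙ (approxRpowNeg β ε) ⟪x, x⟫_A <• cfcₙ (fun t : ℝ => t ^ β) ⟪x, x⟫_A =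
      x <• cfcₙ (fun t => t / (t + ε)) ⟪x, x⟫_A := by
  rw [← op_smul_mul, ← cfcₙ_mul _ _ _
    ((continuousOn_approxRpowNeg hβ1 hε).mono (quasispectrum_inner_self_subset x))
    (approxRpowNeg_apply_zero hβ1) (Real.continuous_rpow_const hβ.le).continuousOn
    (Real.zero_rpow hβ.ne'),
    cfcₙ_congr fun t ht => approxRpowNeg_mul_rpow (quasispectrum_inner_self_subset x ht)]

end RightCStarModule

open RightCStarModule in
/-- For any element `x` of a right Hilbert `A`-module `X` and any
`0 < α < 1`, there exists `w ∈ X` with `x = w · ⟪x, x⟫^{α/2}`, the power being taken via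
the (non-unital) continuous functional calculus on the positive element `⟪x, x⟫`. -/
theorem exists_factor_through_power_of_inner_self
    {A : Type*} [NonUnitalCStarAlgebra A] [PartialOrder A] [StarOrderedRing A]
    {X : Type*} [NormedAddCommGroup X] [NormedSpace ℂ X] [SMul Aᵐᵒᵖ X] [RightCStarModule A X]
    [CompleteSpace X]
    (x : X) (α : ℝ≥0) (hα0 : 0 < α) (hα1 : α < 1) :
    ∃ w : X, x = w <• (CFC.nnrpow (⟪x, x⟫_A) (α / 2)) := by
  have hβ0 : 0 < ((α / 2 : ℝ≥0) : ℝ) := by positivity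
  have hβ : ((α / 2 : ℝ≥0) : ℝ) < 1 / 2 := by
    rw [NNReal.coe_div, NNReal.coe_two]; linarith [NNReal.coe_lt_one.mpr hα1]
  have hε : ∀ n : ℕ, (0 : ℝ) < 1 / (n + 1) := fun n => Nat.one_div_pos_of_nat
  obtain ⟨w, hw⟩ := cauchySeq_tendsto_of_complete <| cauchySeq_op_smul_cfcₙ_approxRpowNeg x hε
    tendsto_one_div_add_atTop_nhds_zero_nat hβ (by linarith)
  refine ⟨w, tendsto_nhds_unique (tendsto_op_smul_cfcₙ_div_add x hε
    tendsto_one_div_add_atTop_nhds_zero_nat) ?_⟩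
  rw [show CFC.nnrpow ⟪x, x⟫_A (α / 2) = cfcₙ (fun t : ℝ => t ^ ((α / 2 : ℝ≥0) : ℝ)) ⟪x, x⟫_A
    from CFC.nnrpow_eq_cfcₙ_real _ _ RightCStarModule.inner_self_nonneg]
  simp_rw [← op_smul_cfcₙ_approxRpowNeg_op_smul_cfcₙ_rpow x hβ0 (by linarith) (hε _)]
  exact ((lipschitzWith_op_smul _).continuous.tendsto w).comp hw
end

section
/- Let A be a σ-unital C*-algebra with sequential approximate identity (u_n), set v_1 = u_1^{1/2} and v_i = (u_i − u_{i−1})^{1/2} for i > 1, and let e_{ij} ∈ H_A (the standard Hilbert A-module of sequences (a_n) with Σ a_n* a_n convergent) be the sequence whose j-th entry is v_i and all other entries 0. Then the finite sums Σ_{i,j=1}^{n} Θ_{e_{ij}, e_{ij}} form an approximate unit for K(H_A); that is, (e_{ij}) is a frame for H_A. -/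
/-!
Since `∑_{i<n} v_i² = u_{n-1}` telescopes, the frame sum `∑_{i,j<n} Θ_{e_ij,e_ij}` is the
compression `P_n = diag(u_{n-1}, …, u_{n-1}, 0, 0, …)` of `H_A`. The `P_n` are self-adjoint
contractions converging strongly to the identity: on finitely supported sequences this is the
approximate-unit property of `(u_n)`, and the tails of every `x ∈ H_A` are small. Because
`P_n Θ_{x,y} = Θ_{P_n x, y}` and `Θ_{x,y} P_n = Θ_{x, P_n y}`, strong convergence gives
`P_n F → F` and `F P_n → F` in norm for every finite-rank `F`, and an `ε/3` argument passes to
compact `T`.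

Norm estimates in `H_A` go through finite sections: `√‖∑_{m∈s} x_m* x_m‖` is the norm of `x`
restricted to `s` in the C⋆-module `A^s`, where the triangle and Cauchy–Schwarz inequalities are
available, and one passes to the limit over `s`.
-/

/-- The `A`-valued inner product `⟨x, y⟩ = Σₙ xₙ* yₙ` on sequences in `A`. -/
noncomputable def seqInner {A : Type*} [NonUnitalCStarAlgebra A] (x y : ℕ → A) : A :=
  ∑' n, star (x n) * y n

/-- Membership in the standard Hilbert `A`-module `H_A` of sequences `(aₙ)` for which
`Σₙ aₙ* aₙ` converges in `A`. -/
def MemHilbSeq {A : Type*} [NonUnitalCStarAlgebra A] (x : ℕ → A) : Prop :=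
  Summable fun n => star (x n) * x n

/-- The Hilbert-module norm `‖x‖ = √‖⟨x, x⟩‖` on `H_A`. -/
noncomputable def seqNorm {A : Type*} [NonUnitalCStarAlgebra A] (x : ℕ → A) : ℝ :=
  Real.sqrt ‖seqInner x x‖

/-- The rank-one operator `Θ_{x,y} : z ↦ x · ⟨y, z⟩` on sequences. -/
noncomputable def seqTheta {A : Type*} [NonUnitalCStarAlgebra A] (x y : ℕ → A) :
    (ℕ → A) → (ℕ → A) :=
  fun z n => x n * seqInner y z

/-- Membership in the compact operators `K(H_A)`: `T` preserves `H_A` and is approximated,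
in the operator norm over `H_A`, by finite linear combinations of rank-one operators with
vectors in `H_A`. -/
noncomputable def SeqInCompacts {A : Type*} [NonUnitalCStarAlgebra A]
    (T : (ℕ → A) → (ℕ → A)) : Prop :=
  (∀ x, MemHilbSeq x → MemHilbSeq (T x)) ∧
  ∀ ε : ℝ, 0 < ε → ∃ (n : ℕ) (c : Fin n → ℂ) (u v : Fin n → ℕ → A),
    (∀ i, MemHilbSeq (u i) ∧ MemHilbSeq (v i)) ∧
    ∀ z, MemHilbSeq z →
      seqNorm (T z - ∑ i, c i • seqTheta (u i) (v i) z) ≤ ε * seqNorm z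

/-- The sequence `v` built from an increasing approximate identity: `v₀ = u₀^{1/2}` and
`vᵢ = (uᵢ − u_{i−1})^{1/2}` for `i ≥ 1`. -/
noncomputable def frameRoot {A : Type*} [NonUnitalCStarAlgebra A] [PartialOrder A]
    [StarOrderedRing A] (u : ℕ → A) : ℕ → A
  | 0 => CFC.sqrt (u 0)
  | (i + 1) => CFC.sqrt (u (i + 1) - u i)

/-- The frame element `e_{ij} ∈ H_A`: the sequence whose `j`-th entry is `vᵢ` and whose
other entries vanish. -/
noncomputable def frameElem {A : Type*} [NonUnitalCStarAlgebra A] [PartialOrder A]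
    [StarOrderedRing A] (u : ℕ → A) (i j : ℕ) : ℕ → A :=
  fun n => if n = j then frameRoot u i else 0

open scoped WithCStarModule
open Filter Topology Finset

section HilbertModule

variable {A : Type*} [NonUnitalCStarAlgebra A]

/-- Mathlib's C⋆-modules are left modules with `⟪a, b⟫ = b * star a` on `A`, so the entries are
starred to get `⟪restrictMod s y, restrictMod s x⟫ = ∑ m ∈ s, star (x m) * y m`. -/
noncomputable def restrictMod (s : Finset ℕ) : (ℕ → A) →+ C⋆ᵐᵒᵈ(A, s → A) where
  toFun x := (WithCStarModule.equiv A (s → A)).symm fun i => star (x i)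
  map_zero' := by ext; simp
  map_add' x y := by ext; simp

lemma restrictMod_apply (s : Finset ℕ) (x : ℕ → A) (i : s) :
    restrictMod s x i = star (x i) := rfl

lemma restrictMod_smul (s : Finset ℕ) (c : ℂ) (x : ℕ → A) :
    restrictMod s (c • x) = star c • restrictMod s x := by
  ext; simp [restrictMod_apply, star_smul]

lemma memHilbSeq_zero : MemHilbSeq (0 : ℕ → A) := by
  simp [MemHilbSeq, summable_zero]

lemma seqNorm_nonneg (x : ℕ → A) : 0 ≤ seqNorm x := Real.sqrt_nonneg _

lemma seqNorm_neg (x : ℕ → A) : seqNorm (-x) = seqNorm x := by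
  simp [seqNorm, seqInner]

lemma seqNorm_sub_comm (x y : ℕ → A) : seqNorm (x - y) = seqNorm (y - x) := by
  rw [← seqNorm_neg, neg_sub]

variable [PartialOrder A] [StarOrderedRing A]

lemma norm_restrictMod (s : Finset ℕ) (x : ℕ → A) :
    ‖restrictMod s x‖ = √‖∑ m ∈ s, star (x m) * x m‖ := by
  rw [WithCStarModule.pi_norm]
  simp [restrictMod_apply, WithCStarModule.inner_def, Finset.sum_attach s fun m => star (x m) * x m]

lemma norm_restrictMod_sq (s : Finset ℕ) (x : ℕ → A) :
    ‖restrictMod s x‖ ^ 2 = ‖∑ m ∈ s, star (x m) * x m‖ := by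
  rw [norm_restrictMod, Real.sq_sqrt (norm_nonneg _)]

lemma norm_sum_star_mul_le (s : Finset ℕ) (x y : ℕ → A) :
    ‖∑ m ∈ s, star (x m) * y m‖ ≤ ‖restrictMod s x‖ * ‖restrictMod s y‖ := by
  have h := CStarModule.norm_inner_le (A := A) _ (x := restrictMod s y) (y := restrictMod s x)
  rw [WithCStarModule.pi_inner, mul_comm] at h
  simpa [restrictMod_apply, WithCStarModule.inner_def,
    Finset.sum_attach s fun m => star (x m) * y m] using h

lemma norm_restrictMod_smul (s : Finset ℕ) (c : ℂ) (x : ℕ → A) :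
    ‖restrictMod s (c • x)‖ = ‖c‖ * ‖restrictMod s x‖ := by
  rw [restrictMod_smul, norm_smul, norm_star]

lemma norm_restrictMod_mul_right_le (s : Finset ℕ) (x : ℕ → A) (a : A) :
    ‖restrictMod s (fun m => x m * a)‖ ≤ ‖restrictMod s x‖ * ‖a‖ := by
  rw [← sq_le_sq₀ (norm_nonneg _) (by positivity), mul_pow, norm_restrictMod_sq,
    norm_restrictMod_sq]
  calc ‖∑ m ∈ s, star (x m * a) * (x m * a)‖
      = ‖star a * (∑ m ∈ s, star (x m) * x m) * a‖ := by
        simp only [star_mul, Finset.mul_sum, Finset.sum_mul, mul_assoc]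
    _ ≤ ‖star a‖ * ‖∑ m ∈ s, star (x m) * x m‖ * ‖a‖ := norm_mul₃_le
    _ = ‖∑ m ∈ s, star (x m) * x m‖ * ‖a‖ ^ 2 := by rw [norm_star]; ring

lemma norm_restrictMod_smul_left_le (s : Finset ℕ) (w : A) (x : ℕ → A) :
    ‖restrictMod s (w • x)‖ ≤ ‖w‖ * ‖restrictMod s x‖ := by
  have hle : ∑ m ∈ s, star (w * x m) * (w * x m) ≤ ‖star w * w‖ • ∑ m ∈ s, star (x m) * x m := by
    rw [Finset.smul_sum]
    refine Finset.sum_le_sum fun m _ => ?_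
    simpa only [star_mul, mul_assoc] using
      CStarAlgebra.star_left_conjugate_le_norm_smul (a := x m) (b := star w * w)
  have hnorm := CStarAlgebra.norm_le_norm_of_nonneg_of_le
    (Finset.sum_nonneg fun m _ => star_mul_self_nonneg (w * x m)) hle
  rw [norm_smul, norm_norm, CStarRing.norm_star_mul_self] at hnorm
  rw [← sq_le_sq₀ (norm_nonneg _) (by positivity), mul_pow, norm_restrictMod_sq,
    norm_restrictMod_sq]
  simpa [sq] using hnorm

lemma memHilbSeq_iff_forall_norm_restrictMod_lt {x : ℕ → A} :
    MemHilbSeq x ↔ ∀ ε > 0, ∃ s, ∀ t, Disjoint t s → ‖restrictMod t x‖ < ε := by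
  simp only [MemHilbSeq, summable_iff_vanishing_norm, ← norm_restrictMod_sq]
  constructor
  · intro h ε hε
    obtain ⟨s, hs⟩ := h (ε ^ 2) (by positivity)
    exact ⟨s, fun t ht => (pow_lt_pow_iff_left₀ (norm_nonneg _) hε.le two_ne_zero).1 (hs t ht)⟩
  · intro h ε hε
    obtain ⟨s, hs⟩ := h (√ε) (Real.sqrt_pos.2 hε)
    exact ⟨s, fun t ht => (Real.lt_sqrt (norm_nonneg _)).1 (hs t ht)⟩

lemma MemHilbSeq.of_norm_restrictMod_le {x y : ℕ → A} (hx : MemHilbSeq x) (K : ℝ)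
    (h : ∀ s, ‖restrictMod s y‖ ≤ K * ‖restrictMod s x‖) : MemHilbSeq y := by
  rw [memHilbSeq_iff_forall_norm_restrictMod_lt] at hx ⊢
  intro ε hε
  obtain ⟨s, hs⟩ := hx (ε / (|K| + 1)) (by positivity)
  refine ⟨s, fun t ht => ?_⟩
  calc ‖restrictMod t y‖ ≤ (|K| + 1) * ‖restrictMod t x‖ :=
        (h t).trans (by gcongr; linarith [le_abs_self K])
    _ < (|K| + 1) * (ε / (|K| + 1)) := by gcongr; exact hs t ht
    _ = ε := by field_simp

lemma MemHilbSeq.add {x y : ℕ → A} (hx : MemHilbSeq x) (hy : MemHilbSeq y) :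
    MemHilbSeq (x + y) := by
  rw [memHilbSeq_iff_forall_norm_restrictMod_lt] at hx hy ⊢
  intro ε hε
  obtain ⟨s, hs⟩ := hx (ε / 2) (by positivity)
  obtain ⟨s', hs'⟩ := hy (ε / 2) (by positivity)
  refine ⟨s ∪ s', fun t ht => ?_⟩
  rw [Finset.disjoint_union_right] at ht
  calc ‖restrictMod t (x + y)‖ ≤ ‖restrictMod t x‖ + ‖restrictMod t y‖ := by
        rw [map_add]; exact norm_add_le _ _
    _ < ε / 2 + ε / 2 := add_lt_add (hs t ht.1) (hs' t ht.2)
    _ = ε := add_halves ε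

lemma MemHilbSeq.smul {x : ℕ → A} (hx : MemHilbSeq x) (c : ℂ) : MemHilbSeq (c • x) :=
  hx.of_norm_restrictMod_le ‖c‖ fun s => (norm_restrictMod_smul s c x).le

lemma MemHilbSeq.neg {x : ℕ → A} (hx : MemHilbSeq x) : MemHilbSeq (-x) := by
  simpa using hx.smul (-1)

lemma MemHilbSeq.sub {x y : ℕ → A} (hx : MemHilbSeq x) (hy : MemHilbSeq y) :
    MemHilbSeq (x - y) := by
  simpa [sub_eq_add_neg] using hx.add hy.neg

lemma MemHilbSeq.mul_right {x : ℕ → A} (hx : MemHilbSeq x) (a : A) :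
    MemHilbSeq fun m => x m * a :=
  hx.of_norm_restrictMod_le ‖a‖ fun s =>
    (norm_restrictMod_mul_right_le s x a).trans_eq (mul_comm _ _)

lemma memHilbSeq_sum {ι : Type*} (s : Finset ι) {x : ι → ℕ → A}
    (hx : ∀ i ∈ s, MemHilbSeq (x i)) : MemHilbSeq (∑ i ∈ s, x i) := by
  classical
  induction s using Finset.induction_on with
  | empty => simpa using memHilbSeq_zero
  | insert i s hi ih =>
    rw [Finset.sum_insert hi]
    exact (hx i (mem_insert_self i s)).add (ih fun j hj => hx j (mem_insert_of_mem hj))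

lemma tendsto_norm_restrictMod {x : ℕ → A} (hx : MemHilbSeq x) :
    Tendsto (fun s => ‖restrictMod s x‖) atTop (𝓝 (seqNorm x)) := by
  simp only [norm_restrictMod]
  exact hx.hasSum.norm.sqrt

lemma norm_restrictMod_le_seqNorm {x : ℕ → A} (hx : MemHilbSeq x) (s : Finset ℕ) :
    ‖restrictMod s x‖ ≤ seqNorm x := by
  rw [norm_restrictMod]
  exact Real.sqrt_le_sqrt <| CStarAlgebra.norm_le_norm_of_nonneg_of_le
    (Finset.sum_nonneg fun m _ => star_mul_self_nonneg (x m))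
    (hx.sum_le_tsum s fun m _ => star_mul_self_nonneg (x m))

lemma seqNorm_le_of_norm_restrictMod_le {x : ℕ → A} (hx : MemHilbSeq x) {C : ℝ}
    (h : ∀ s, ‖restrictMod s x‖ ≤ C) : seqNorm x ≤ C :=
  le_of_tendsto' (tendsto_norm_restrictMod hx) h

lemma seqNorm_add_le {x y : ℕ → A} (hx : MemHilbSeq x) (hy : MemHilbSeq y) :
    seqNorm (x + y) ≤ seqNorm x + seqNorm y :=
  seqNorm_le_of_norm_restrictMod_le (hx.add hy) fun s => by
    rw [map_add]
    exact (norm_add_le _ _).trans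
      (add_le_add (norm_restrictMod_le_seqNorm hx s) (norm_restrictMod_le_seqNorm hy s))

lemma seqNorm_smul_le {x : ℕ → A} (hx : MemHilbSeq x) (c : ℂ) :
    seqNorm (c • x) ≤ ‖c‖ * seqNorm x :=
  seqNorm_le_of_norm_restrictMod_le (hx.smul c) fun s => by
    rw [norm_restrictMod_smul]; gcongr; exact norm_restrictMod_le_seqNorm hx s

lemma seqNorm_mul_right_le {x : ℕ → A} (hx : MemHilbSeq x) (a : A) :
    seqNorm (fun m => x m * a) ≤ seqNorm x * ‖a‖ :=
  seqNorm_le_of_norm_restrictMod_le (hx.mul_right a) fun s =>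
    (norm_restrictMod_mul_right_le s x a).trans (by gcongr; exact norm_restrictMod_le_seqNorm hx s)

lemma seqNorm_sub_le_sub_add_sub {x y z : ℕ → A} (hx : MemHilbSeq x) (hy : MemHilbSeq y)
    (hz : MemHilbSeq z) : seqNorm (x - z) ≤ seqNorm (x - y) + seqNorm (y - z) := by
  simpa using seqNorm_add_le (hx.sub hy) (hy.sub hz)

lemma seqNorm_sub_le {x y : ℕ → A} (hx : MemHilbSeq x) (hy : MemHilbSeq y) :
    seqNorm (x - y) ≤ seqNorm x + seqNorm y := by
  simpa [seqNorm_neg] using seqNorm_sub_le_sub_add_sub hx memHilbSeq_zero hy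

lemma seqNorm_sum_le {ι : Type*} (s : Finset ι) {x : ι → ℕ → A}
    (hx : ∀ i ∈ s, MemHilbSeq (x i)) : seqNorm (∑ i ∈ s, x i) ≤ ∑ i ∈ s, seqNorm (x i) := by
  classical
  induction s using Finset.induction_on with
  | empty => simp [seqNorm, seqInner]
  | insert i s hi ih =>
    have hs : ∀ j ∈ s, MemHilbSeq (x j) := fun j hj => hx j (mem_insert_of_mem hj)
    rw [Finset.sum_insert hi, Finset.sum_insert hi]
    exact (seqNorm_add_le (hx i (mem_insert_self i s)) (memHilbSeq_sum s hs)).trans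
      (by gcongr; exact ih hs)

lemma summable_star_mul {x y : ℕ → A} (hx : MemHilbSeq x) (hy : MemHilbSeq y) :
    Summable fun m => star (x m) * y m := by
  rw [summable_iff_vanishing_norm]
  intro ε hε
  have hC : 0 < seqNorm y + 1 := by linarith [seqNorm_nonneg y]
  obtain ⟨s, hs⟩ := memHilbSeq_iff_forall_norm_restrictMod_lt.1 hx (ε / (seqNorm y + 1))
    (div_pos hε hC)
  refine ⟨s, fun t ht => ?_⟩
  calc ‖∑ m ∈ t, star (x m) * y m‖ ≤ ‖restrictMod t x‖ * ‖restrictMod t y‖ :=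
        norm_sum_star_mul_le t x y
    _ ≤ ‖restrictMod t x‖ * (seqNorm y + 1) := by
        gcongr; linarith [norm_restrictMod_le_seqNorm hy t]
    _ < ε / (seqNorm y + 1) * (seqNorm y + 1) := by gcongr; exact hs t ht
    _ = ε := div_mul_cancel₀ ε hC.ne'

lemma norm_seqInner_le {x y : ℕ → A} (hx : MemHilbSeq x) (hy : MemHilbSeq y) :
    ‖seqInner x y‖ ≤ seqNorm x * seqNorm y :=
  le_of_tendsto' (summable_star_mul hx hy).hasSum.norm fun s =>
    (norm_sum_star_mul_le s x y).trans (mul_le_mul (norm_restrictMod_le_seqNorm hx s)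
      (norm_restrictMod_le_seqNorm hy s) (norm_nonneg _) (seqNorm_nonneg x))

lemma seqInner_sub_left {x y z : ℕ → A} (hx : MemHilbSeq x) (hy : MemHilbSeq y)
    (hz : MemHilbSeq z) : seqInner (x - y) z = seqInner x z - seqInner y z := by
  simp only [seqInner, Pi.sub_apply, star_sub, sub_mul]
  exact (summable_star_mul hx hz).tsum_sub (summable_star_mul hy hz)

end HilbertModule

section Compress

variable {A : Type*} [NonUnitalCStarAlgebra A]

def truncate (N : ℕ) (x : ℕ → A) : ℕ → A := fun m => if m < N then x m else 0

noncomputable def compress (w : A) (N : ℕ) : (ℕ → A) →ₗ[ℂ] ℕ → A where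
  toFun x := truncate N (w • x)
  map_add' x y := by ext m; by_cases h : m < N <;> simp [truncate, h, mul_add]
  map_smul' c x := by ext m; by_cases h : m < N <;> simp [truncate, h, mul_smul_comm]

lemma compress_apply (w : A) (N : ℕ) (x : ℕ → A) : compress w N x = truncate N (w • x) := rfl

lemma memHilbSeq_truncate (N : ℕ) (x : ℕ → A) : MemHilbSeq (truncate N x) := by
  refine summable_of_ne_finset_zero (s := range N) fun m hm => ?_
  simp [truncate, Finset.mem_range.not.1 hm]

lemma memHilbSeq_compress (w : A) (N : ℕ) (x : ℕ → A) : MemHilbSeq (compress w N x) :=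
  memHilbSeq_truncate N _

lemma compress_seqTheta (w : A) (N : ℕ) (x y z : ℕ → A) :
    compress w N (seqTheta x y z) = seqTheta (compress w N x) y z := by
  ext m; by_cases h : m < N <;> simp [compress_apply, truncate, seqTheta, h, mul_assoc]

lemma seqInner_compress {w : A} (hw : IsSelfAdjoint w) (N : ℕ) (x z : ℕ → A) :
    seqInner x (compress w N z) = seqInner (compress w N x) z := by
  refine tsum_congr fun m => ?_
  by_cases h : m < N <;> simp [compress_apply, truncate, h, star_mul, hw.star_eq, mul_assoc]

variable [PartialOrder A] [StarOrderedRing A]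

lemma seqNorm_truncate (N : ℕ) (x : ℕ → A) :
    seqNorm (truncate N x) = ‖restrictMod (range N) x‖ := by
  rw [norm_restrictMod, seqNorm, seqInner, tsum_eq_sum (s := range N)]
  · congr 2
    exact Finset.sum_congr rfl fun m hm => by simp [truncate, Finset.mem_range.1 hm]
  · intro m hm
    simp [truncate, Finset.mem_range.not.1 hm]

lemma seqNorm_truncate_le_sum_norm (N : ℕ) (x : ℕ → A) :
    seqNorm (truncate N x) ≤ ∑ m ∈ range N, ‖x m‖ := by
  rw [seqNorm_truncate]
  refine (WithCStarModule.pi_norm_le_sum_norm _).trans_eq ?_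
  simpa [restrictMod_apply] using Finset.sum_attach (range N) fun m => ‖x m‖

lemma seqNorm_compress_le {w : A} (hw : ‖w‖ ≤ 1) (N : ℕ) {x : ℕ → A} (hx : MemHilbSeq x) :
    seqNorm (compress w N x) ≤ seqNorm x := by
  rw [compress_apply, seqNorm_truncate]
  calc ‖restrictMod (range N) (w • x)‖ ≤ ‖w‖ * ‖restrictMod (range N) x‖ :=
        norm_restrictMod_smul_left_le _ w x
    _ ≤ 1 * seqNorm x := by
        gcongr
        exact norm_restrictMod_le_seqNorm hx _
    _ = seqNorm x := one_mul _

lemma exists_seqNorm_sub_truncate_le {x : ℕ → A} (hx : MemHilbSeq x) {ε : ℝ} (hε : 0 < ε) :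
    ∃ M, seqNorm (x - truncate M x) ≤ ε := by
  obtain ⟨s, hs⟩ := memHilbSeq_iff_forall_norm_restrictMod_lt.1 hx ε hε
  obtain ⟨M, hM⟩ : ∃ M, ∀ m ∈ s, m < M :=
    ⟨s.sup id + 1, fun m hm => Nat.lt_succ_of_le (Finset.le_sup (f := id) hm)⟩
  refine ⟨M, seqNorm_le_of_norm_restrictMod_le (hx.sub (memHilbSeq_truncate _ _))
    fun t => le_of_lt ?_⟩
  have htail : ‖restrictMod t (x - truncate M x)‖ = ‖restrictMod (t.filter (M ≤ ·)) x‖ := by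
    simp only [norm_restrictMod, Finset.sum_filter]
    congr 2
    refine Finset.sum_congr rfl fun m _ => ?_
    by_cases h : m < M <;> simp [truncate, h, not_le.2, le_of_not_gt]
  rw [htail]
  exact hs _ (Finset.disjoint_left.2 fun m hmt hms => (Finset.mem_filter.1 hmt).2.not_gt (hM m hms))

lemma seqNorm_compress_sub_le {x : ℕ → A} (hx : MemHilbSeq x) {w : A} (hw : ‖w‖ ≤ 1)
    {M N : ℕ} (hMN : M ≤ N) :
    seqNorm (compress w N x - x) ≤
      2 * seqNorm (x - truncate M x) + ∑ m ∈ range M, ‖w * x m - x m‖ := by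
  have hsplit : compress w N x - x =
      compress w N (x - truncate M x) + truncate M (w • x - x) - (x - truncate M x) := by
    ext m
    by_cases hM : m < M
    · simp [compress_apply, truncate, hM, hMN.trans_lt' hM]
    · by_cases hN : m < N <;> simp [compress_apply, truncate, hM, hN]
  have htail := hx.sub (memHilbSeq_truncate M x)
  have hhead : seqNorm (truncate M (w • x - x)) ≤ ∑ m ∈ range M, ‖w * x m - x m‖ := by
    simpa using seqNorm_truncate_le_sum_norm M (w • x - x)
  rw [hsplit]
  calc _ ≤ seqNorm (compress w N (x - truncate M x)) + seqNorm (truncate M (w • x - x))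
          + seqNorm (x - truncate M x) :=
        (seqNorm_sub_le ((memHilbSeq_compress _ _ _).add (memHilbSeq_truncate _ _)) htail).trans
          (by gcongr; exact seqNorm_add_le (memHilbSeq_compress _ _ _) (memHilbSeq_truncate _ _))
    _ ≤ seqNorm (x - truncate M x) + ∑ m ∈ range M, ‖w * x m - x m‖
          + seqNorm (x - truncate M x) := by
        gcongr
        exact seqNorm_compress_le hw N htail
    _ = _ := by ring

lemma tendsto_seqNorm_compress_sub {w : ℕ → A} {N : ℕ → ℕ} (hw_norm : ∀ k, ‖w k‖ ≤ 1)
    (hw : ∀ a : A, Tendsto (fun k => ‖w k * a - a‖) atTop (𝓝 0)) (hN : Tendsto N atTop atTop)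
    {x : ℕ → A} (hx : MemHilbSeq x) :
    Tendsto (fun k => seqNorm (compress (w k) (N k) x - x)) atTop (𝓝 0) := by
  refine tendsto_order.2 ⟨fun a ha => Eventually.of_forall fun k => ha.trans_le
    (seqNorm_nonneg _), fun a ha => ?_⟩
  obtain ⟨M, hM⟩ := exists_seqNorm_sub_truncate_le hx (by positivity : 0 < a / 4)
  have hhead : Tendsto (fun k => ∑ m ∈ range M, ‖w k * x m - x m‖) atTop (𝓝 0) := by
    simpa using tendsto_finsetSum (range M) fun m _ => hw (x m)
  filter_upwards [hhead.eventually (gt_mem_nhds (half_pos ha)), hN.eventually_ge_atTop M]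
    with k hk hMk
  linarith [seqNorm_compress_sub_le hx (hw_norm k) hMk]

end Compress

section Frame

variable {A : Type*} [NonUnitalCStarAlgebra A] [PartialOrder A] [StarOrderedRing A]

lemma frameRoot_nonneg (u : ℕ → A) (i : ℕ) : 0 ≤ frameRoot u i := by
  cases i <;> exact CFC.sqrt_nonneg _

lemma sum_range_frameRoot_mul_self {u : ℕ → A} (hu_pos : ∀ n, 0 ≤ u n) (hu_mono : Monotone u)
    (n : ℕ) : ∑ i ∈ range (n + 1), frameRoot u i * frameRoot u i = u n := by
  induction n with
  | zero => simpa [frameRoot] using CFC.sqrt_mul_sqrt_self (u 0) (hu_pos 0)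
  | succ n ih =>
    rw [Finset.sum_range_succ, ih, frameRoot,
      CFC.sqrt_mul_sqrt_self _ (sub_nonneg.2 (hu_mono n.le_succ)), add_sub_cancel]

lemma seqInner_frameElem (u : ℕ → A) (i j : ℕ) (y : ℕ → A) :
    seqInner (frameElem u i j) y = frameRoot u i * y j := by
  rw [seqInner, tsum_eq_single j fun m hm => by simp [frameElem, hm]]
  simp [frameElem, (frameRoot_nonneg u i).isSelfAdjoint.star_eq]

/-- For `n = 0` the junk index `0 - 1 = 0` is harmless: `compress (u 0) 0 = 0`. -/
lemma sum_seqTheta_frameElem {u : ℕ → A} (hu_pos : ∀ n, 0 ≤ u n) (hu_mono : Monotone u)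
    (n : ℕ) (y : ℕ → A) :
    ∑ i ∈ range n, ∑ j ∈ range n, seqTheta (frameElem u i j) (frameElem u i j) y =
      compress (u (n - 1)) n y := by
  ext m
  simp only [Finset.sum_apply, seqTheta, seqInner_frameElem, frameElem, ite_mul, zero_mul,
    Finset.sum_ite_eq, Finset.mem_range, compress_apply, truncate]
  by_cases hm : m < n
  · obtain ⟨k, rfl⟩ : ∃ k, n = k + 1 := ⟨n - 1, by omega⟩
    simp [hm, ← mul_assoc, ← Finset.sum_mul, sum_range_frameRoot_mul_self hu_pos hu_mono]
  · simp [hm]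

end Frame

section FiniteRank

variable {A : Type*} [NonUnitalCStarAlgebra A]

lemma seqTheta_sub_left (x x' y z : ℕ → A) :
    seqTheta x y z - seqTheta x' y z = seqTheta (x - x') y z := by
  ext; simp [seqTheta, sub_mul]

lemma seqTheta_compress (x y z : ℕ → A) {w : A} (hw : IsSelfAdjoint w) (N : ℕ) :
    seqTheta x y (compress w N z) = seqTheta x (compress w N y) z := by
  unfold seqTheta
  rw [seqInner_compress hw]

variable [PartialOrder A] [StarOrderedRing A]

lemma seqTheta_sub_middle (x : ℕ → A) {y y' z : ℕ → A} (hy : MemHilbSeq y)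
    (hy' : MemHilbSeq y') (hz : MemHilbSeq z) :
    seqTheta x y z - seqTheta x y' z = seqTheta x (y - y') z := by
  ext; simp [seqTheta, seqInner_sub_left hy hy' hz, mul_sub]

lemma seqNorm_seqTheta_le {x y z : ℕ → A} (hx : MemHilbSeq x) (hy : MemHilbSeq y)
    (hz : MemHilbSeq z) : seqNorm (seqTheta x y z) ≤ seqNorm x * seqNorm y * seqNorm z :=
  (seqNorm_mul_right_le hx _).trans <| by
    rw [mul_assoc]; exact mul_le_mul_of_nonneg_left (norm_seqInner_le hy hz) (seqNorm_nonneg x)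

variable {ι : Type*} [Fintype ι] (c : ι → ℂ) {x y : ι → ℕ → A}

lemma memHilbSeq_finiteRank (hx : ∀ i, MemHilbSeq (x i)) (z : ℕ → A) :
    MemHilbSeq (∑ i, c i • seqTheta (x i) (y i) z) :=
  memHilbSeq_sum _ fun i _ => ((hx i).mul_right _).smul (c i)

lemma seqNorm_finiteRank_le (hx : ∀ i, MemHilbSeq (x i)) (hy : ∀ i, MemHilbSeq (y i))
    {z : ℕ → A} (hz : MemHilbSeq z) :
    seqNorm (∑ i, c i • seqTheta (x i) (y i) z) ≤
      (∑ i, ‖c i‖ * (seqNorm (x i) * seqNorm (y i))) * seqNorm z := by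
  rw [Finset.sum_mul]
  refine (seqNorm_sum_le _ fun i _ => ((hx i).mul_right _).smul (c i)).trans
    (Finset.sum_le_sum fun i _ => ?_)
  refine (seqNorm_smul_le ((hx i).mul_right _) (c i)).trans ?_
  rw [mul_assoc]
  gcongr
  exact seqNorm_seqTheta_le (hx i) (hy i) hz

lemma seqNorm_compress_finiteRank_sub_le (hx : ∀ i, MemHilbSeq (x i))
    (hy : ∀ i, MemHilbSeq (y i)) (w : A) (N : ℕ) {z : ℕ → A} (hz : MemHilbSeq z) :
    seqNorm (compress w N (∑ i, c i • seqTheta (x i) (y i) z) - ∑ i, c i • seqTheta (x i) (y i) z)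
      ≤ (∑ i, ‖c i‖ * (seqNorm (compress w N (x i) - x i) * seqNorm (y i))) * seqNorm z := by
  simp only [map_sum, map_smul, compress_seqTheta, ← Finset.sum_sub_distrib, ← smul_sub,
    seqTheta_sub_left]
  exact seqNorm_finiteRank_le c (fun i => (memHilbSeq_compress _ _ _).sub (hx i)) hy hz

lemma seqNorm_finiteRank_compress_sub_le (hx : ∀ i, MemHilbSeq (x i))
    (hy : ∀ i, MemHilbSeq (y i)) {w : A} (hw : IsSelfAdjoint w) (N : ℕ) {z : ℕ → A}
    (hz : MemHilbSeq z) :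
    seqNorm (∑ i, c i • seqTheta (x i) (y i) (compress w N z) - ∑ i, c i • seqTheta (x i) (y i) z)
      ≤ (∑ i, ‖c i‖ * (seqNorm (x i) * seqNorm (compress w N (y i) - y i))) * seqNorm z := by
  simp only [seqTheta_compress _ _ _ hw, ← Finset.sum_sub_distrib, ← smul_sub,
    seqTheta_sub_middle _ (memHilbSeq_compress _ _ _) (hy _) hz]
  exact seqNorm_finiteRank_le c hx (fun i => (memHilbSeq_compress _ _ _).sub (hy i)) hz

end FiniteRank

section Approximation

variable {A : Type*} [NonUnitalCStarAlgebra A] [PartialOrder A] [StarOrderedRing A]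

lemma seqNorm_compress_sub_le_of_near {a b : ℕ → A} (ha : MemHilbSeq a) (hb : MemHilbSeq b)
    {w : A} (hw : ‖w‖ ≤ 1) (N : ℕ) :
    seqNorm (compress w N a - a) ≤ 2 * seqNorm (a - b) + seqNorm (compress w N b - b) := by
  have hPa := memHilbSeq_compress w N a
  have hPb := memHilbSeq_compress w N b
  calc seqNorm (compress w N a - a)
      ≤ seqNorm (compress w N a - compress w N b) + seqNorm (compress w N b - b)
          + seqNorm (b - a) :=
        (seqNorm_sub_le_sub_add_sub hPa hb ha).trans
          (by gcongr; exact seqNorm_sub_le_sub_add_sub hPa hPb hb)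
    _ ≤ seqNorm (a - b) + seqNorm (compress w N b - b) + seqNorm (a - b) := by
        rw [← map_sub, seqNorm_sub_comm b]
        gcongr
        exact seqNorm_compress_le hw N (ha.sub hb)
    _ = _ := by ring

lemma seqNorm_apply_compress_sub_le {T F : (ℕ → A) → ℕ → A}
    (hT : ∀ z, MemHilbSeq z → MemHilbSeq (T z)) (hF : ∀ z, MemHilbSeq (F z)) {δ : ℝ}
    (hδ : 0 ≤ δ) (hTF : ∀ z, MemHilbSeq z → seqNorm (T z - F z) ≤ δ * seqNorm z)
    {w : A} (hw : ‖w‖ ≤ 1) (N : ℕ) {z : ℕ → A} (hz : MemHilbSeq z) :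
    seqNorm (T (compress w N z) - T z) ≤
      2 * δ * seqNorm z + seqNorm (F (compress w N z) - F z) := by
  have hPz := memHilbSeq_compress w N z
  calc seqNorm (T (compress w N z) - T z)
      ≤ seqNorm (T (compress w N z) - F (compress w N z))
          + seqNorm (F (compress w N z) - F z) + seqNorm (F z - T z) :=
        (seqNorm_sub_le_sub_add_sub (hT _ hPz) (hF z) (hT z hz)).trans
          (by gcongr; exact seqNorm_sub_le_sub_add_sub (hT _ hPz) (hF _) (hF z))
    _ ≤ δ * seqNorm z + seqNorm (F (compress w N z) - F z) + δ * seqNorm z := by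
        rw [seqNorm_sub_comm (F z)]
        gcongr
        · exact (hTF _ hPz).trans (by gcongr; exact seqNorm_compress_le hw N hz)
        · exact hTF z hz
    _ = _ := by ring

lemma eventually_compress_finiteRank {w : ℕ → A} {N : ℕ → ℕ}
    (hw : ∀ k, IsSelfAdjoint (w k))
    (hP : ∀ v, MemHilbSeq v → Tendsto (fun k => seqNorm (compress (w k) (N k) v - v)) atTop (𝓝 0))
    {ι : Type*} [Fintype ι] (c : ι → ℂ) {x y : ι → ℕ → A} (hx : ∀ i, MemHilbSeq (x i))
    (hy : ∀ i, MemHilbSeq (y i)) {δ : ℝ} (hδ : 0 < δ) :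
    ∀ᶠ k in atTop, ∀ z, MemHilbSeq z →
      seqNorm (compress (w k) (N k) (∑ i, c i • seqTheta (x i) (y i) z) -
          ∑ i, c i • seqTheta (x i) (y i) z) ≤ δ * seqNorm z ∧
      seqNorm (∑ i, c i • seqTheta (x i) (y i) (compress (w k) (N k) z) -
          ∑ i, c i • seqTheta (x i) (y i) z) ≤ δ * seqNorm z := by
  have hL : Tendsto (fun k => ∑ i, ‖c i‖ *
      (seqNorm (compress (w k) (N k) (x i) - x i) * seqNorm (y i))) atTop (𝓝 0) := by
    simpa using tendsto_finsetSum _ fun i _ => ((hP _ (hx i)).mul_const _).const_mul ‖c i‖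
  have hR : Tendsto (fun k => ∑ i, ‖c i‖ *
      (seqNorm (x i) * seqNorm (compress (w k) (N k) (y i) - y i))) atTop (𝓝 0) := by
    simpa using tendsto_finsetSum _ fun i _ => ((hP _ (hy i)).const_mul _).const_mul ‖c i‖
  filter_upwards [hL.eventually (ge_mem_nhds hδ), hR.eventually (ge_mem_nhds hδ)]
    with k hLk hRk z hz
  exact ⟨(seqNorm_compress_finiteRank_sub_le c hx hy _ _ hz).trans
      (mul_le_mul_of_nonneg_right hLk (seqNorm_nonneg z)),
    (seqNorm_finiteRank_compress_sub_le c hx hy (hw k) _ hz).trans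
      (mul_le_mul_of_nonneg_right hRk (seqNorm_nonneg z))⟩

end Approximation

theorem frame_for_standard_module_general
    {A : Type*} [NonUnitalCStarAlgebra A] [PartialOrder A] [StarOrderedRing A]
    (u : ℕ → A) (hu_pos : ∀ n, 0 ≤ u n) (hu_mono : Monotone u)
    (hu_norm : ∀ n, ‖u n‖ ≤ 1)
    (hu_apprL : ∀ a : A, Filter.Tendsto (fun n => ‖u n * a - a‖) Filter.atTop (nhds 0)) :
    ∀ T : (ℕ → A) → (ℕ → A), SeqInCompacts T →
      ∀ ε : ℝ, 0 < ε → ∃ N : ℕ, ∀ n ≥ N, ∀ z, MemHilbSeq z →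
        seqNorm ((∑ i ∈ Finset.range n, ∑ j ∈ Finset.range n,
            seqTheta (frameElem u i j) (frameElem u i j) (T z)) - T z) ≤ ε * seqNorm z ∧
        seqNorm (T (∑ i ∈ Finset.range n, ∑ j ∈ Finset.range n,
            seqTheta (frameElem u i j) (frameElem u i j) z) - T z) ≤ ε * seqNorm z := by
  rintro T ⟨hT, hT_approx⟩ ε hε
  obtain ⟨k, c, x, y, hxy, hF⟩ := hT_approx (ε / 3) (by positivity)
  have hFmem := memHilbSeq_finiteRank c (y := y) fun i => (hxy i).1
  have hP : ∀ v, MemHilbSeq v →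
      Tendsto (fun n => seqNorm (compress (u (n - 1)) n v - v)) atTop (𝓝 0) := fun v hv =>
    tendsto_seqNorm_compress_sub (fun n => hu_norm _)
      (fun a => (hu_apprL a).comp (tendsto_sub_atTop_nat 1)) tendsto_id hv
  obtain ⟨N, hN⟩ := eventually_atTop.1 <| eventually_compress_finiteRank
    (fun n => (hu_pos _).isSelfAdjoint) hP c (fun i => (hxy i).1) (fun i => (hxy i).2)
    (by positivity : 0 < ε / 3)
  refine ⟨N, fun n hn z hz => ?_⟩
  obtain ⟨hleft, hright⟩ := hN n hn z hz
  simp only [sum_seqTheta_frameElem hu_pos hu_mono]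
  constructor
  · calc _ ≤ 2 * (ε / 3 * seqNorm z) + ε / 3 * seqNorm z :=
          (seqNorm_compress_sub_le_of_near (hT z hz) (hFmem z) (hu_norm _) n).trans
            (add_le_add (by gcongr; exact hF z hz) hleft)
      _ = ε * seqNorm z := by ring
  · calc _ ≤ 2 * (ε / 3) * seqNorm z + ε / 3 * seqNorm z :=
          (seqNorm_apply_compress_sub_le hT hFmem (by positivity) hF (hu_norm _) n hz).trans
            (by gcongr)
      _ = ε * seqNorm z := by ring

/-- If `A` is a σ-unital C*-algebra with increasing positive sequential
approximate identity `(uₙ)` and `e_{ij} ∈ H_A` are as above, then the finite sums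
`Σ_{i,j<n} Θ_{e_{ij}, e_{ij}}` form an approximate unit for `K(H_A)`; that is, the family
`(e_{ij})` is a frame for the standard Hilbert module `H_A`. -/
theorem frame_for_standard_module
    {A : Type*} [NonUnitalCStarAlgebra A] [PartialOrder A] [StarOrderedRing A]
    (u : ℕ → A) (hu_pos : ∀ n, 0 ≤ u n) (hu_mono : Monotone u)
    (hu_norm : ∀ n, ‖u n‖ ≤ 1)
    (hu_apprL : ∀ a : A, Filter.Tendsto (fun n => ‖u n * a - a‖) Filter.atTop (nhds 0))
    (hu_apprR : ∀ a : A, Filter.Tendsto (fun n => ‖a * u n - a‖) Filter.atTop (nhds 0)) :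
    ∀ T : (ℕ → A) → (ℕ → A), SeqInCompacts T →
      ∀ ε : ℝ, 0 < ε → ∃ N : ℕ, ∀ n ≥ N, ∀ z, MemHilbSeq z →
        seqNorm ((∑ i ∈ Finset.range n, ∑ j ∈ Finset.range n,
            seqTheta (frameElem u i j) (frameElem u i j) (T z)) - T z) ≤ ε * seqNorm z ∧
        seqNorm (T (∑ i ∈ Finset.range n, ∑ j ∈ Finset.range n,
            seqTheta (frameElem u i j) (frameElem u i j) z) - T z) ≤ ε * seqNorm z :=
  frame_for_standard_module_general u hu_pos hu_mono hu_norm hu_apprL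
end
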